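/- arXiv:2307.03850 — 2 statements merged into one kernel-verified Lean document; each statement's English description precedes it below -/
import Mathlib

section
/- The polynomials L^5 + 10QL^3 + 15Q^2L and L^4 + 6QL^2 + 3Q^2 have no common zero in ℂ^2 other than (L,Q) = (0,0). That is, if (l,c) ∈ ℂ^2 satisfies l^5 + 10cl^3 + 15c^2l = 0 and l^4 + 6cl^2 + 3c^2 = 0, then l = 0 and c = 0. -/
/-- The only common zero in `ℂ²` of `s_5(L,Q) = L^5 + 10QL^3 + 15Q^2L` and
`s_4(L,Q) = L^4 + 6QL^2 + 3Q^2` is `(0,0)`. -/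
theorem momentForms_no_common_zero (l c : ℂ)
    (h5 : l ^ 5 + 10 * c * l ^ 3 + 15 * c ^ 2 * l = 0)
    (h4 : l ^ 4 + 6 * c * l ^ 2 + 3 * c ^ 2 = 0) :
    l = 0 ∧ c = 0 := by
  by_cases hl : l = 0
  · subst hl
    simp at h4
    exact ⟨rfl, h4⟩
  · exfalso
    have key : l ^ 4 + 10 * c * l ^ 2 + 15 * c ^ 2 = 0 := by
      have : l * (l ^ 4 + 10 * c * l ^ 2 + 15 * c ^ 2) = 0 := by ring_nf; linear_combination h5
      rcases mul_eq_zero.mp this with h | h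
      · exact absurd h hl
      · exact h
    have hc : c * (l ^ 2 + 3 * c) = 0 := by linear_combination (key - h4) / 4
    rcases mul_eq_zero.mp hc with h | h
    · subst h
      simp at key
      exact hl key
    · have hl2 : l ^ 2 = -3 * c := by linear_combination h
      have : (-6 : ℂ) * c ^ 2 = 0 := by
        have := h4
        rw [show l ^ 4 = (l ^ 2) ^ 2 by ring, hl2] at this
        linear_combination this
      have hc0 : c = 0 := by
        have := mul_eq_zero.mp this
        simpa using this
      rw [hc0] at hl2
      simp at hl2
      exact hl hl2
end

section
/- Let ℓ ∈ ℂ[X_1,...,X_n] be homogeneous of degree 1 and q ∈ ℂ[X_1,...,X_n] homogeneous of degree 2, with n ≥ 1. If ℓ^5 + 10qℓ^3 + 15q^2ℓ = 0 and ℓ^4 + 6qℓ^2 + 3q^2 = 0 in ℂ[X_1,...,X_n], then ℓ = 0 and q = 0. -/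
open MvPolynomial

/-- If `ℓ` is a linear form and `q` a quadratic form on `ℂ^n` such that the Gaussian
moment forms `s_5(ℓ,q) = ℓ^5 + 10qℓ^3 + 15q^2ℓ` and `s_4(ℓ,q) = ℓ^4 + 6qℓ^2 + 3q^2`
both vanish, then `ℓ = 0` and `q = 0`. -/
theorem momentForms_vanish_imp_zero (n : ℕ) (hn : 1 ≤ n)
    (ℓ q : MvPolynomial (Fin n) ℂ)
    (hℓ : ℓ.IsHomogeneous 1) (hq : q.IsHomogeneous 2)
    (h5 : ℓ ^ 5 + 10 * q * ℓ ^ 3 + 15 * q ^ 2 * ℓ = 0)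
    (h4 : ℓ ^ 4 + 6 * q * ℓ ^ 2 + 3 * q ^ 2 = 0) :
    ℓ = 0 ∧ q = 0 := by
  by_cases hl : ℓ = 0
  · subst hl
    have hq2 : q ^ 2 = 0 := by
      have h3 : (3 : MvPolynomial (Fin n) ℂ) * q ^ 2 = 0 := by linear_combination h4
      have h3ne : (3 : MvPolynomial (Fin n) ℂ) ≠ 0 := by
        norm_num
      exact (mul_eq_zero.1 h3).resolve_left h3ne
    exact ⟨rfl, pow_eq_zero_iff (n := 2) (by norm_num) |>.1 hq2⟩
  · exfalso
    have hA : ℓ * (ℓ ^ 4 + 10 * q * ℓ ^ 2 + 15 * q ^ 2) = 0 := by linear_combination h5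
    have hA0 : ℓ ^ 4 + 10 * q * ℓ ^ 2 + 15 * q ^ 2 = 0 :=
      (mul_eq_zero.1 hA).resolve_left hl
    have hB : (4 : MvPolynomial (Fin n) ℂ) * q * (ℓ ^ 2 + 3 * q) = 0 := by
      linear_combination hA0 - h4
    rcases mul_eq_zero.1 hB with h | h
    · rcases mul_eq_zero.1 h with h4z | hq0
      · exact (by norm_num : (4 : MvPolynomial (Fin n) ℂ) ≠ 0) h4z
      · have : ℓ ^ 4 = 0 := by linear_combination h4 - 6 * ℓ ^ 2 * hq0 - 3 * (q + 0) * hq0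
        exact hl (pow_eq_zero_iff (n := 4) (by norm_num) |>.1 this)
    · -- ℓ² = -3q
      have hq2 : (6 : MvPolynomial (Fin n) ℂ) * q ^ 2 = 0 := by
        linear_combination -h4 + (ℓ ^ 2 + 3 * q) * h
      have hq0 : q = 0 := by
        have := (mul_eq_zero.1 hq2).resolve_left
          (by norm_num : (6 : MvPolynomial (Fin n) ℂ) ≠ 0)
        exact pow_eq_zero_iff (n := 2) (by norm_num) |>.1 this
      have : ℓ ^ 2 = 0 := by linear_combination h - 3 * hq0
      exact hl (pow_eq_zero_iff (n := 2) (by norm_num) |>.1 this)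
end
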